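/- If Λ is separating, then Λ-bisimilarity is sound for behavioural equivalence: for any Λ-bisimulation S between T-coalgebras C and D, x S y implies that x and y are behaviourally equivalent. -/

import Mathlib

open CategoryTheory

universe u

/-- A monotone predicate lifting for a `Set`-endofunctor `T`:
a natural transformation `Q → Q ∘ T^op` whose components are monotone. -/
structure PredLifting (T : Type u ⥤ Type u) where
  app : ∀ X : Type u, Set X → Set (T.obj X)
  natural : ∀ {X Y : Type u} (f : X → Y) (A : Set Y),
    app X (f ⁻¹' A) = ⇑(T.map (TypeCat.ofHom f)) ⁻¹' app Y A
  mono : ∀ (X : Type u) ⦃A B : Set X⦄, A ⊆ B → app X A ⊆ app X B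

/-- Relational image `S[A]`. -/
def RelImage {X Y : Type u} (S : X → Y → Prop) (A : Set X) : Set Y :=
  {y | ∃ x ∈ A, S x y}

/-- `S` is a `Λ`-simulation from the `T`-coalgebra `(X,ξ)` to `(Y,ζ)`. -/
def IsSim {T : Type u ⥤ Type u} (Λ : Set (PredLifting T))
    {X Y : Type u} (ξ : X → T.obj X) (ζ : Y → T.obj Y)
    (S : X → Y → Prop) : Prop :=
  ∀ x y, S x y → ∀ L ∈ Λ, ∀ A : Set X,
    ξ x ∈ L.app X A → ζ y ∈ L.app Y (RelImage S A)

/-- `Λ` is separating: elements of `T X` are determined by the lifted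
predicates they satisfy. -/
def Separating {T : Type u ⥤ Type u} (Λ : Set (PredLifting T)) : Prop :=
  ∀ (X : Type u) (t t' : T.obj X),
    (∀ L ∈ Λ, ∀ A : Set X, t ∈ L.app X A ↔ t' ∈ L.app X A) → t = t'

/-- `f` is a coalgebra morphism. -/
def IsCoalgMor {T : Type u ⥤ Type u} {X Y : Type u}
    (ξ : X → T.obj X) (ζ : Y → T.obj Y) (f : X → Y) : Prop :=
  ∀ x, ζ (f x) = T.map (TypeCat.ofHom f) (ξ x)

/-- Behavioural equivalence between states of two coalgebras. -/
def BhvEquiv {T : Type u ⥤ Type u} {X Y : Type u}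
    (ξ : X → T.obj X) (ζ : Y → T.obj Y) (x : X) (y : Y) : Prop :=
  ∃ (Z : Type u) (χ : Z → T.obj Z) (f : X → Z) (g : Y → Z),
    IsCoalgMor ξ χ f ∧ IsCoalgMor ζ χ g ∧ f x = g y

/-!
Glue the two carriers along `S`, i.e. take the quotient `Z` of `X ⊕ Y` identifying `x` with `y`
whenever `S x y`, and push `ξ` and `ζ` forward along the two inclusions into `Z`. The only
question is whether the two pushed-forward structures agree on `S`-related states. By
naturality, `T f (ξ x)` satisfies a lifted predicate `♥ A` iff `ξ x ∈ ♥ (f⁻¹ A)`; the simulation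
property and monotonicity carry this over to `ζ y ∈ ♥ (g⁻¹ A)`, and the converse direction
uses `S⁻¹`. Separation then forces `T f (ξ x) = T g (ζ y)`, so the structure descends to `Z`.
-/

section Transfer

variable {T : Type u ⥤ Type u} {X Y Z : Type u}

theorem PredLifting.mem_app_preimage_iff (L : PredLifting T) (f : X → Y) (A : Set Y)
    (t : T.obj X) : t ∈ L.app X (f ⁻¹' A) ↔ T.map (TypeCat.ofHom f) t ∈ L.app Y A := by
  rw [L.natural f A]
  rfl

theorem relImage_preimage_subset {S : X → Y → Prop} {f : X → Z} {g : Y → Z}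
    (hfg : ∀ x y, S x y → f x = g y) (A : Set Z) : RelImage S (f ⁻¹' A) ⊆ g ⁻¹' A := by
  rintro y ⟨x, hx, hxy⟩
  rwa [Set.mem_preimage, ← hfg x y hxy]

theorem IsSim.map_mem_app {Λ : Set (PredLifting T)} {ξ : X → T.obj X} {ζ : Y → T.obj Y}
    {S : X → Y → Prop} (hS : IsSim Λ ξ ζ S) {f : X → Z} {g : Y → Z}
    (hfg : ∀ x y, S x y → f x = g y) {x : X} {y : Y} (hxy : S x y)
    {L : PredLifting T} (hL : L ∈ Λ) {A : Set Z}
    (h : T.map (TypeCat.ofHom f) (ξ x) ∈ L.app Z A) :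
    T.map (TypeCat.ofHom g) (ζ y) ∈ L.app Z A := by
  rw [← L.mem_app_preimage_iff] at h ⊢
  exact L.mono Y (relImage_preimage_subset hfg A) (hS x y hxy L hL _ h)

theorem Separating.map_eq_map_of_bisim {Λ : Set (PredLifting T)} (hsep : Separating Λ)
    {ξ : X → T.obj X} {ζ : Y → T.obj Y} {S : X → Y → Prop}
    (h1 : IsSim Λ ξ ζ S) (h2 : IsSim Λ ζ ξ (fun y x => S x y)) {f : X → Z} {g : Y → Z}
    (hfg : ∀ x y, S x y → f x = g y) {x : X} {y : Y} (hxy : S x y) :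
    T.map (TypeCat.ofHom f) (ξ x) = T.map (TypeCat.ofHom g) (ζ y) :=
  hsep Z _ _ fun _ hL _ =>
    ⟨h1.map_mem_app hfg hxy hL, h2.map_mem_app (fun y x h => (hfg x y h).symm) hxy hL⟩

end Transfer

def GlueRel {X Y : Type u} (S : X → Y → Prop) : X ⊕ Y → X ⊕ Y → Prop
  | .inl x, .inr y => S x y
  | _, _ => False

theorem lambda_bisim_sound {T : Type u ⥤ Type u}
    {Λ : Set (PredLifting T)} (hsep : Separating Λ) {X Y : Type u}
    (ξ : X → T.obj X) (ζ : Y → T.obj Y) (S : X → Y → Prop)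
    (h1 : IsSim Λ ξ ζ S) (h2 : IsSim Λ ζ ξ (fun y x => S x y)) :
    ∀ x y, S x y → BhvEquiv ξ ζ x y := by
  intro x y hxy
  let f : X → Quot (GlueRel S) := Quot.mk _ ∘ Sum.inl
  let g : Y → Quot (GlueRel S) := Quot.mk _ ∘ Sum.inr
  have hfg : ∀ x y, S x y → f x = g y := fun _ _ h => Quot.sound h
  let χ : Quot (GlueRel S) → T.obj (Quot (GlueRel S)) :=
    Quot.lift (Sum.elim (T.map (TypeCat.ofHom f) ∘ ξ) (T.map (TypeCat.ofHom g) ∘ ζ)) <| by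
      rintro (x' | y') (x'' | y'') h
      · exact h.elim
      · exact hsep.map_eq_map_of_bisim h1 h2 hfg h
      · exact h.elim
      · exact h.elim
  exact ⟨_, χ, f, g, fun _ => rfl, fun _ => rfl, hfg x y hxy⟩
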